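/- arXiv:2212.11716 — 6 statements merged into one kernel-verified Lean document; each statement's English description precedes it below -/
import Mathlib

section
/- Let D = D₁ ⊕ ⋯ ⊕ Dₛ be a block-diagonal complex matrix whose blocks Dⱼ are diagonalizable, and suppose that for i ≠ j no eigenvalue of D_i equals the negative of an eigenvalue of D_j. Then a complex matrix A anticommutes with D (i.e. AD = −DA) if and only if A is block-diagonal, A = A₁ ⊕ ⋯ ⊕ Aₛ, with each Aⱼ anticommuting with Dⱼ. -/
open Matrix

lemma diag_mem_spectrum {m : ℕ} (d : Fin m → ℂ) (a : Fin m) :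
    d a ∈ spectrum ℂ (Matrix.diagonal d) := by
  rw [spectrum.mem_iff]
  intro h
  rw [Matrix.isUnit_iff_isUnit_det] at h
  have : (algebraMap ℂ (Matrix (Fin m) (Fin m) ℂ)) (d a) - Matrix.diagonal d
      = Matrix.diagonal (fun i => d a - d i) := by
    rw [Matrix.algebraMap_eq_diagonal, ← Matrix.diagonal_sub]
    rfl
  rw [this, Matrix.det_diagonal] at h
  have : (∏ i, (d a - d i)) = 0 :=
    Finset.prod_eq_zero (Finset.mem_univ a) (by simp)
  rw [this] at h
  exact h.ne_zero rfl

lemma sylvester {m k : ℕ} (Di : Matrix (Fin m) (Fin m) ℂ)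
    (Dj : Matrix (Fin k) (Fin k) ℂ)
    (hi : ∃ (P : Matrix (Fin m) (Fin m) ℂ) (d : Fin m → ℂ),
      IsUnit P ∧ Di = P * Matrix.diagonal d * P⁻¹)
    (hj : ∃ (Q : Matrix (Fin k) (Fin k) ℂ) (e : Fin k → ℂ),
      IsUnit Q ∧ Dj = Q * Matrix.diagonal e * Q⁻¹)
    (hsp : ∀ μ ∈ spectrum ℂ Di, -μ ∉ spectrum ℂ Dj)
    (X : Matrix (Fin m) (Fin k) ℂ) (hX : Di * X + X * Dj = 0) : X = 0 := by
  obtain ⟨P, d, hP, hDi⟩ := hi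
  obtain ⟨Q, e, hQ, hDj⟩ := hj
  have hPinv : P⁻¹ * P = 1 := Matrix.nonsing_inv_mul P ((Matrix.isUnit_iff_isUnit_det P).mp hP)
  have hPinv' : P * P⁻¹ = 1 := Matrix.mul_nonsing_inv P ((Matrix.isUnit_iff_isUnit_det P).mp hP)
  have hQinv : Q⁻¹ * Q = 1 := Matrix.nonsing_inv_mul Q ((Matrix.isUnit_iff_isUnit_det Q).mp hQ)
  have hQinv' : Q * Q⁻¹ = 1 := Matrix.mul_nonsing_inv Q ((Matrix.isUnit_iff_isUnit_det Q).mp hQ)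
  -- spectrum of Di/Dj
  have hdspec : ∀ a, d a ∈ spectrum ℂ Di := by
    intro a
    rw [hDi]
    have hu : P * Matrix.diagonal d * P⁻¹
        = (hP.unit : Matrix (Fin m) (Fin m) ℂ) * Matrix.diagonal d
          * ((hP.unit⁻¹ : _) : Matrix (Fin m) (Fin m) ℂ) := by
      rw [Matrix.coe_units_inv, hP.unit_spec]
    rw [hu, spectrum.units_conjugate]
    exact diag_mem_spectrum d a
  have hespec : ∀ b, e b ∈ spectrum ℂ Dj := by
    intro b
    rw [hDj]
    have hu : Q * Matrix.diagonal e * Q⁻¹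
        = (hQ.unit : Matrix (Fin k) (Fin k) ℂ) * Matrix.diagonal e
          * ((hQ.unit⁻¹ : _) : Matrix (Fin k) (Fin k) ℂ) := by
      rw [Matrix.coe_units_inv, hQ.unit_spec]
    rw [hu, spectrum.units_conjugate]
    exact diag_mem_spectrum e b
  set Y := P⁻¹ * X * Q with hY
  have e1 : Matrix.diagonal d * Y = P⁻¹ * (Di * X * Q) := by
    rw [hDi, hY]
    simp only [Matrix.mul_assoc]
    rw [← Matrix.mul_assoc P⁻¹ P, hPinv, Matrix.one_mul]
  have e2 : Y * Matrix.diagonal e = P⁻¹ * (X * Dj * Q) := by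
    rw [hDj, hY]
    simp only [Matrix.mul_assoc]
    rw [hQinv, Matrix.mul_one]
  have key : Matrix.diagonal d * Y + Y * Matrix.diagonal e = 0 := by
    rw [e1, e2, ← Matrix.mul_add, ← Matrix.add_mul, hX]
    simp
  have hY0 : Y = 0 := by
    ext a b
    have h1 := congrFun (congrFun key a) b
    simp only [Matrix.add_apply, Matrix.diagonal_mul, Matrix.mul_diagonal,
      Matrix.zero_apply] at h1
    have hne : d a + e b ≠ 0 := by
      intro hc
      apply hsp (d a) (hdspec a)
      rw [neg_eq_of_add_eq_zero_right hc]
      exact hespec b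
    have h2 : (d a + e b) * Y a b = 0 := by
      linear_combination h1
    have := (mul_eq_zero.mp h2).resolve_left hne
    simpa using this
  have : X = P * Y * Q⁻¹ := by
    rw [hY]
    rw [show P * (P⁻¹ * X * Q) * Q⁻¹ = (P * P⁻¹) * X * (Q * Q⁻¹) by
      simp only [Matrix.mul_assoc]]
    rw [hPinv', hQinv']
    simp
  rw [this, hY0]
  simp

theorem stmt_2 (s : ℕ) (nn : Fin s → ℕ)
    (D : ∀ j : Fin s, Matrix (Fin (nn j)) (Fin (nn j)) ℂ)
    (hdiag : ∀ j, ∃ (P : Matrix (Fin (nn j)) (Fin (nn j)) ℂ) (d : Fin (nn j) → ℂ),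
      IsUnit P ∧ D j = P * Matrix.diagonal d * P⁻¹)
    (hspec : ∀ i j : Fin s, i ≠ j →
      ∀ μ ∈ spectrum ℂ (D i), -μ ∉ spectrum ℂ (D j))
    (A : Matrix (Σ j : Fin s, Fin (nn j)) (Σ j : Fin s, Fin (nn j)) ℂ) :
    A * Matrix.blockDiagonal' D = -(Matrix.blockDiagonal' D * A) ↔
      ∃ B : ∀ j : Fin s, Matrix (Fin (nn j)) (Fin (nn j)) ℂ,
        A = Matrix.blockDiagonal' B ∧ ∀ j, B j * D j = -(D j * B j) := by
  constructor
  · intro h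
    have hmulR : ∀ (i j : Fin s) (a : Fin (nn i)) (b : Fin (nn j)),
        (A * Matrix.blockDiagonal' D) ⟨i, a⟩ ⟨j, b⟩
          = ∑ c, A ⟨i, a⟩ ⟨j, c⟩ * D j c b := by
      intro i j a b
      rw [Matrix.mul_apply, ← Finset.univ_sigma_univ, Finset.sum_sigma]
      rw [Finset.sum_eq_single j]
      · apply Finset.sum_congr rfl
        intro c _
        rw [Matrix.blockDiagonal'_apply_eq]
      · intro k _ hk
        apply Finset.sum_eq_zero
        intro c _
        rw [Matrix.blockDiagonal'_apply_ne _ _ _ hk, mul_zero]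
      · intro hj; exact absurd (Finset.mem_univ j) hj
    have hmulL : ∀ (i j : Fin s) (a : Fin (nn i)) (b : Fin (nn j)),
        (Matrix.blockDiagonal' D * A) ⟨i, a⟩ ⟨j, b⟩
          = ∑ c, D i a c * A ⟨i, c⟩ ⟨j, b⟩ := by
      intro i j a b
      rw [Matrix.mul_apply, ← Finset.univ_sigma_univ, Finset.sum_sigma]
      rw [Finset.sum_eq_single i]
      · apply Finset.sum_congr rfl
        intro c _
        rw [Matrix.blockDiagonal'_apply_eq]
      · intro k _ hk
        apply Finset.sum_eq_zero
        intro c _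
        rw [Matrix.blockDiagonal'_apply_ne _ _ _ (Ne.symm hk), zero_mul]
      · intro hi; exact absurd (Finset.mem_univ i) hi
    set X : ∀ i j : Fin s, Matrix (Fin (nn i)) (Fin (nn j)) ℂ :=
      fun i j => fun a b => A ⟨i, a⟩ ⟨j, b⟩ with hXdef
    have hblock : ∀ i j : Fin s, D i * X i j + X i j * D j = 0 := by
      intro i j
      ext a b
      have hab := congrFun (congrFun h ⟨i, a⟩) ⟨j, b⟩
      rw [hmulR i j a b, Matrix.neg_apply, hmulL i j a b] at hab
      simp only [Matrix.add_apply, Matrix.zero_apply, Matrix.mul_apply]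
      simp only [hXdef]
      linear_combination hab
    have hoff : ∀ i j : Fin s, i ≠ j → X i j = 0 := by
      intro i j hij
      exact sylvester (D i) (D j) (hdiag i) (hdiag j) (hspec i j hij) (X i j) (hblock i j)
    refine ⟨fun j => X j j, ?_, ?_⟩
    · ext ⟨i, a⟩ ⟨j, b⟩
      by_cases hij : i = j
      · subst hij
        rw [Matrix.blockDiagonal'_apply_eq]
      · rw [Matrix.blockDiagonal'_apply_ne _ _ _ hij]
        exact congrFun (congrFun (hoff i j hij) a) b
    · intro j
      have hb := hblock j j
      ext a b
      have h2 := congrFun (congrFun hb a) b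
      simp only [Matrix.add_apply, Matrix.zero_apply] at h2
      simp only [Matrix.neg_apply]
      linear_combination h2
  · rintro ⟨B, rfl, hB⟩
    rw [← Matrix.blockDiagonal'_mul, ← Matrix.blockDiagonal'_mul, ← Matrix.blockDiagonal'_neg]
    exact congrArg _ (funext hB)
end

section
/- Let A₁, …, A_p be an SVD-system of skew-hermitian n×n complex matrices and let α₁, …, α_p be complex numbers. Then exp(Σⱼ αⱼ Aⱼ) = Iₙ + Σⱼ [ sin(αⱼ) Aⱼ + (1 − cos(αⱼ)) Aⱼ² ]. -/
open Matrix

/-- A family of nonzero complex `n×n` matrices is an SVD-system if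
`Aₕ* Aⱼ = Aₕ Aⱼ* = 0` for `h ≠ j` and `Aⱼ Aⱼ* Aⱼ = Aⱼ` for every `j`. -/
def IsSVDSystem {n p : ℕ} (A : Fin p → Matrix (Fin n) (Fin n) ℂ) : Prop :=
  (∀ j, A j ≠ 0) ∧
  (∀ h j, h ≠ j → (A h)ᴴ * A j = 0 ∧ A h * (A j)ᴴ = 0) ∧
  (∀ j, A j * (A j)ᴴ * A j = A j)

lemma pow_odd_of_cube {n : ℕ} {M : Matrix (Fin n) (Fin n) ℂ} (h : M ^ 3 = -M) (m : ℕ) :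
    M ^ (2 * m + 1) = ((-1 : ℂ) ^ m) • M := by
  induction m with
  | zero => simp
  | succ k ih =>
      have e : 2 * (k + 1) + 1 = (2 * k + 1) + 2 := by ring
      rw [e, pow_add, ih, smul_mul_assoc, ← pow_succ' M 2, h, pow_succ]
      simp [smul_smul, mul_comm]

lemma pow_even_of_cube {n : ℕ} {M : Matrix (Fin n) (Fin n) ℂ} (h : M ^ 3 = -M) (m : ℕ) :
    M ^ (2 * (m + 1)) = ((-1 : ℂ) ^ m) • M ^ 2 := by
  have e : 2 * (m + 1) = (2 * m + 1) + 1 := by ring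
  rw [e, pow_succ, pow_odd_of_cube h, smul_mul_assoc, ← pow_two]

lemma exp_of_cube {n : ℕ} {M : Matrix (Fin n) (Fin n) ℂ} (h : M ^ 3 = -M) (α : ℂ) :
    NormedSpace.exp (α • M) =
      1 + Complex.sin α • M + (1 - Complex.cos α) • M ^ 2 := by
  rw [NormedSpace.exp_eq_tsum (𝕂 := ℂ)]
  refine HasSum.tsum_eq ?_
  have hodd : HasSum (fun m : ℕ => (((2 * m + 1).factorial : ℂ))⁻¹ • (α • M) ^ (2 * m + 1))
      (Complex.sin α • M) := by
    have key : (fun m : ℕ => (((2 * m + 1).factorial : ℂ))⁻¹ • (α • M) ^ (2 * m + 1)) =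
        fun m : ℕ => ((-1 : ℂ) ^ m * α ^ (2 * m + 1) / ((2 * m + 1).factorial : ℂ)) • M := by
      funext m
      rw [smul_pow, pow_odd_of_cube h, smul_smul, smul_smul]
      congr 1
      rw [div_eq_mul_inv]
      ring
    rw [key]
    exact (Complex.hasSum_sin α).smul_const M
  have heven : HasSum (fun m : ℕ => (((2 * m).factorial : ℂ))⁻¹ • (α • M) ^ (2 * m))
      (1 + (1 - Complex.cos α) • M ^ 2) := by
    rw [← hasSum_nat_add_iff' 1]
    have hs0 : (∑ i ∈ Finset.range 1,
        (((2 * i).factorial : ℂ))⁻¹ • (α • M) ^ (2 * i)) = 1 := by simp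
    rw [hs0, add_sub_cancel_left]
    have hshift : HasSum
        (fun m : ℕ => (-1 : ℂ) ^ (m + 1) * α ^ (2 * (m + 1)) / ((2 * (m + 1)).factorial : ℂ))
        (Complex.cos α - 1) := by
      rw [hasSum_nat_add_iff (f := fun m : ℕ =>
        (-1 : ℂ) ^ m * α ^ (2 * m) / ((2 * m).factorial : ℂ)) 1]
      simpa using Complex.hasSum_cos α
    have h2 := hshift.neg.smul_const (M ^ 2)
    rw [neg_sub] at h2
    have key : (fun m : ℕ => (((2 * (m + 1)).factorial : ℂ))⁻¹ • (α • M) ^ (2 * (m + 1))) =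
        fun m : ℕ =>
          (-((-1 : ℂ) ^ (m + 1) * α ^ (2 * (m + 1)) / ((2 * (m + 1)).factorial : ℂ))) • M ^ 2 := by
      funext m
      rw [smul_pow, pow_even_of_cube h, smul_smul, smul_smul]
      congr 1
      rw [div_eq_mul_inv, pow_succ]
      ring
    show HasSum (fun m : ℕ => (((2 * (m + 1)).factorial : ℂ))⁻¹ • (α • M) ^ (2 * (m + 1)))
      ((1 - Complex.cos α) • M ^ 2)
    rw [key]
    exact h2
  have := HasSum.even_add_odd
    (f := fun k : ℕ => ((k.factorial : ℂ))⁻¹ • (α • M) ^ k) heven hodd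
  convert this using 1
  · rfl
  abel

lemma B_mul_B_eq_zero {n : ℕ} {A B : Matrix (Fin n) (Fin n) ℂ} (hAB : A * B = 0) (a b : ℂ) :
    (Complex.sin a • A + (1 - Complex.cos a) • A ^ 2) *
      (Complex.sin b • B + (1 - Complex.cos b) • B ^ 2) = 0 := by
  have h1 : A * B ^ 2 = 0 := by rw [pow_two, ← mul_assoc, hAB, zero_mul]
  have h2 : A ^ 2 * B = 0 := by rw [pow_two, mul_assoc, hAB, mul_zero]
  have h3 : A ^ 2 * B ^ 2 = 0 := by rw [pow_two, mul_assoc, h1, mul_zero]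
  simp [add_mul, mul_add, smul_mul_assoc, mul_smul_comm, hAB, h1, h2, h3]

lemma key_svd {n p : ℕ} (A : Fin p → Matrix (Fin n) (Fin n) ℂ)
    (hz : ∀ h j, h ≠ j → A h * A j = 0) (hc : ∀ j, A j ^ 3 = -(A j)) (α : Fin p → ℂ)
    (s : Finset (Fin p)) :
    NormedSpace.exp (∑ j ∈ s, α j • A j) =
      1 + ∑ j ∈ s, (Complex.sin (α j) • A j + (1 - Complex.cos (α j)) • (A j) ^ 2) := by
  classical
  induction s using Finset.induction_on with
  | empty => simp [NormedSpace.exp_zero]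
  | @insert a s ha ih =>
      rw [Finset.sum_insert ha, Finset.sum_insert ha]
      have hcomm : Commute (α a • A a) (∑ j ∈ s, α j • A j) := by
        refine Commute.sum_right _ _ _ fun j hj => ?_
        have hja : a ≠ j := fun e => ha (e ▸ hj)
        show (α a • A a) * (α j • A j) = (α j • A j) * (α a • A a)
        simp [smul_mul_assoc, mul_smul_comm, hz a j hja, hz j a hja.symm]
      rw [Matrix.exp_add_of_commute _ _ hcomm, ih, exp_of_cube (hc a) (α a)]
      set Ba := Complex.sin (α a) • A a + (1 - Complex.cos (α a)) • (A a) ^ 2 with hBa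
      set S := ∑ j ∈ s, (Complex.sin (α j) • A j + (1 - Complex.cos (α j)) • (A j) ^ 2) with hS
      have hBaS : Ba * S = 0 := by
        rw [hS, Finset.mul_sum]
        refine Finset.sum_eq_zero fun j hj => ?_
        exact B_mul_B_eq_zero (hz a j (fun e => ha (e ▸ hj))) (α a) (α j)
      have hmul : (1 + Ba) * (1 + S) = 1 + (Ba + S) := by
        rw [add_mul, mul_add, mul_add, one_mul, mul_one, hBaS, add_zero, one_mul]
        abel
      rw [← add_assoc, add_assoc (1 : Matrix (Fin n) (Fin n) ℂ), ← hBa, hmul, add_assoc]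
      rw [hBa]
      abel

theorem stmt_7 {n p : ℕ} (A : Fin p → Matrix (Fin n) (Fin n) ℂ)
    (hA : IsSVDSystem A) (hskew : ∀ j, (A j)ᴴ = -(A j)) (α : Fin p → ℂ) :
    NormedSpace.exp (∑ j, α j • A j) =
      1 + ∑ j, (Complex.sin (α j) • A j + (1 - Complex.cos (α j)) • (A j) ^ 2) := by
  have hz : ∀ h j, h ≠ j → A h * A j = 0 := by
    intro h j hne
    have hthis := (hA.2.1 h j hne).1
    rw [hskew h, neg_mul, neg_eq_zero] at hthis
    exact hthis
  have hc : ∀ j, A j ^ 3 = -(A j) := by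
    intro j
    have hthis := hA.2.2 j
    rw [hskew j, mul_neg, neg_mul] at hthis
    have h3 : A j * A j * A j = A j ^ 3 := by rw [pow_succ, pow_two]
    rw [h3] at hthis
    linear_combination (norm := module) -hthis
  exact key_svd A hz hc α Finset.univ
end

section
/- If V is a unitary n×n matrix and X is a skew-hermitian n×n complex matrix satisfying X V = V conj(X) (entrywise complex conjugate), then the trace of X is zero. -/
open Matrix

theorem stmt_10 {n : ℕ} (V X : Matrix (Fin n) (Fin n) ℂ)
    (hV : V ∈ Matrix.unitaryGroup (Fin n) ℂ)
    (hX : Xᴴ = -X)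
    (hcomm : X * V = V * X.map (starRingEnd ℂ)) :
    X.trace = 0 := by
  have hVV : V * Vᴴ = 1 := (Matrix.mem_unitaryGroup_iff.mp hV)
  have hVV' : Vᴴ * V = 1 := (Matrix.mem_unitaryGroup_iff'.mp hV)
  have hmap : X.map (starRingEnd ℂ) = Xᴴᵀ := by
    ext i j; simp [Matrix.conjTranspose_apply, Matrix.map_apply]
  have h1 : X = V * (X.map (starRingEnd ℂ) * Vᴴ) := by
    calc X = X * (V * Vᴴ) := by rw [hVV, Matrix.mul_one]
    _ = (X * V) * Vᴴ := by rw [Matrix.mul_assoc]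
    _ = V * (X.map (starRingEnd ℂ) * Vᴴ) := by rw [hcomm, Matrix.mul_assoc]
  have h2 : X.trace = (X.map (starRingEnd ℂ)).trace := by
    conv_lhs => rw [h1]
    rw [Matrix.trace_mul_comm, Matrix.mul_assoc, hVV', Matrix.mul_one]
  have h3 : (X.map (starRingEnd ℂ)).trace = -X.trace := by
    rw [hmap, Matrix.trace_transpose, hX, Matrix.trace_neg]
  have := h2.trans h3
  linear_combination this / 2
end

section
/- For every automorphism f of the real Lie algebra gl_n(ℂ) that commutes with the adjoint map A ↦ A* and preserves the Jordan triple product (f(ABA) = f(A)f(B)f(A) for all A,B), the fixed-point set Fix(f) = {M : f(M) = M} is an SVD-closed real Lie subalgebra of gl_n(ℂ): every SVD-component of every nonzero element of Fix(f) again lies in Fix(f). -/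
open Matrix

/-- `M = Σⱼ σⱼ Aⱼ` is an SVD-decomposition: the `Aⱼ` form an SVD-system and
`σ₁ > σ₂ > ⋯ > σ_p > 0`. -/
def IsSVDDecomposition {n p : ℕ} (M : Matrix (Fin n) (Fin n) ℂ)
    (σ : Fin p → ℝ) (A : Fin p → Matrix (Fin n) (Fin n) ℂ) : Prop :=
  IsSVDSystem A ∧ StrictAnti σ ∧ (∀ j, 0 < σ j) ∧ M = ∑ j, (σ j : ℂ) • A j

lemma svd_triple_sum {n p : ℕ} {A : Fin p → Matrix (Fin n) (Fin n) ℂ}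
    (hA : IsSVDSystem A) (a b c : Fin p → ℂ) :
    (∑ h, a h • A h) * (∑ h, b h • A h)ᴴ * (∑ h, c h • A h)
      = ∑ h, (a h * star (b h) * c h) • A h := by
  obtain ⟨-, horth, hrec⟩ := hA
  rw [conjTranspose_sum]
  simp_rw [conjTranspose_smul]
  have step1 : (∑ h, a h • A h) * (∑ h, star (b h) • (A h)ᴴ)
      = ∑ h, (a h * star (b h)) • (A h * (A h)ᴴ) := by
    rw [Finset.sum_mul_sum]
    refine Finset.sum_congr rfl fun i _ => ?_
    rw [Finset.sum_eq_single i]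
    · rw [smul_mul_assoc, mul_smul_comm, smul_smul]
    · intro j _ hji
      rw [smul_mul_assoc, mul_smul_comm, (horth i j hji.symm).2, smul_zero, smul_zero]
    · intro h; exact absurd (Finset.mem_univ i) h
  rw [step1, Finset.sum_mul]
  refine Finset.sum_congr rfl fun i _ => ?_
  rw [Finset.mul_sum, Finset.sum_eq_single i]
  · rw [smul_mul_assoc, mul_smul_comm, smul_smul, hrec i]
  · intro j _ hji
    rw [smul_mul_assoc, mul_smul_comm, mul_assoc, (horth i j hji.symm).1, mul_zero,
      smul_zero, smul_zero]
  · intro h; exact absurd (Finset.mem_univ i) h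

/-- real scalar smul on complex matrices is complex scalar smul of the coercion. -/
lemma rsmul_eq {n : ℕ} (r : ℝ) (X : Matrix (Fin n) (Fin n) ℂ) :
    r • X = (r : ℂ) • X := by
  ext i j
  simp [Matrix.smul_apply, Complex.real_smul]

theorem stmt_13 {n : ℕ} (f : Matrix (Fin n) (Fin n) ℂ → Matrix (Fin n) (Fin n) ℂ)
    (hlin : IsLinearMap ℝ f) (hbij : Function.Bijective f)
    (hbracket : ∀ A B, f (A * B - B * A) = f A * f B - f B * f A)
    (hstar : ∀ A, f Aᴴ = (f A)ᴴ)
    (htriple : ∀ A B, f (A * B * A) = f A * f B * f A) :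
    -- Fix(f) is a real Lie subalgebra of gl_n(ℂ):
    (∀ M N, f M = M → f N = N → ∀ a b : ℝ, f (a • M + b • N) = a • M + b • N) ∧
    (∀ M N, f M = M → f N = N → f (M * N - N * M) = M * N - N * M) ∧
    -- and it is SVD-closed: every SVD-component of a fixed point is a fixed point:
    (∀ M, f M = M → ∀ (p : ℕ) (σ : Fin p → ℝ) (A : Fin p → Matrix (Fin n) (Fin n) ℂ),
      IsSVDDecomposition M σ A → ∀ j, f (A j) = A j) := by
  refine ⟨fun M N hM hN a b => by
      rw [hlin.map_add, hlin.map_smul, hlin.map_smul, hM, hN],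
    fun M N hM hN => by rw [hbracket, hM, hN], ?_⟩
  -- polarized triple product identity
  have hpol : ∀ X Y Z, f (X * Y * Z + Z * Y * X) = f X * f Y * f Z + f Z * f Y * f X := by
    intro X Y Z
    have h1 := htriple (X + Z) Y
    have e1 : (X + Z) * Y * (X + Z) = X * Y * X + (X * Y * Z + Z * Y * X) + Z * Y * Z := by
      noncomm_ring
    have e2 : (f X + f Z) * f Y * (f X + f Z)
        = f X * f Y * f X + (f X * f Y * f Z + f Z * f Y * f X) + f Z * f Y * f Z := by
      noncomm_ring
    have hXZ : f (X + Z) = f X + f Z := hlin.map_add X Z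
    rw [e1, hlin.map_add, hlin.map_add, hXZ, e2, htriple X Y, htriple Z Y] at h1
    exact add_left_cancel (add_right_cancel h1)
  intro M hM p σ A hdec j
  obtain ⟨hA, hanti, hpos, hsum⟩ := hdec
  -- the sequence S k = Σ σⱼ^(2k+1) Aⱼ, stable under f
  set S : ℕ → Matrix (Fin n) (Fin n) ℂ :=
    fun k => Nat.rec M (fun _ Sk => (2⁻¹ : ℝ) • (M * Mᴴ * Sk + Sk * Mᴴ * M)) k with hS
  have hSsucc : ∀ k, S (k + 1) = (2⁻¹ : ℝ) • (M * Mᴴ * S k + S k * Mᴴ * M) := fun k => rfl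
  have hSfix : ∀ k, f (S k) = S k := by
    intro k
    induction k with
    | zero => exact hM
    | succ k ih =>
      rw [hSsucc, hlin.map_smul, hpol, hstar, hM, ih]
  have hstarσ : ∀ h, star ((σ h : ℂ)) = (σ h : ℂ) := fun h => by
    simp [Complex.star_def, Complex.conj_ofReal]
  have hSval : ∀ k, S k = ∑ h, ((σ h : ℂ) ^ (2 * k + 1)) • A h := by
    intro k
    induction k with
    | zero =>
      change M = _
      simpa using hsum
    | succ k ih =>
      have t1 : M * Mᴴ * S k = ∑ h, ((σ h : ℂ) ^ (2 * (k + 1) + 1)) • A h := by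
        rw [ih, hsum, svd_triple_sum hA]
        refine Finset.sum_congr rfl fun h _ => ?_
        rw [hstarσ]; ring_nf
      have t2 : S k * Mᴴ * M = ∑ h, ((σ h : ℂ) ^ (2 * (k + 1) + 1)) • A h := by
        rw [ih, hsum, svd_triple_sum hA]
        refine Finset.sum_congr rfl fun h _ => ?_
        rw [hstarσ]; ring_nf
      rw [hSsucc, t1, t2, ← two_smul ℝ, smul_smul]
      norm_num
  -- the Lagrange interpolation polynomial
  have hinj : Set.InjOn (fun h : Fin p => (σ h) ^ 2) (Finset.univ : Finset (Fin p)) := by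
    intro a _ b _ hab
    have ha := hpos a
    have hb := hpos b
    have hab' : σ a ^ 2 = σ b ^ 2 := hab
    have h1 : σ a ≤ σ b := by nlinarith
    have h2 : σ b ≤ σ a := by nlinarith
    exact hanti.injective (le_antisymm h1 h2)
  set q : Polynomial ℝ := Lagrange.interpolate Finset.univ (fun h : Fin p => (σ h) ^ 2)
      (fun h => if h = j then (σ j)⁻¹ else 0) with hq
  have heval : ∀ h : Fin p, Polynomial.eval ((σ h) ^ 2) q
      = if h = j then (σ j)⁻¹ else 0 :=
    fun h => Lagrange.eval_interpolate_at_node _ hinj (Finset.mem_univ h)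
  -- A j as a real-linear combination of the S k
  have hAj : A j = ∑ k ∈ Finset.range (q.natDegree + 1), q.coeff k • S k := by
    have expand : ∀ k, q.coeff k • S k
        = ∑ h, ((q.coeff k * (σ h) ^ (2 * k + 1) : ℝ) : ℂ) • A h := by
      intro k
      rw [hSval k, Finset.smul_sum]
      refine Finset.sum_congr rfl fun h _ => ?_
      rw [rsmul_eq, smul_smul]
      push_cast
      ring_nf
    simp_rw [expand]
    rw [Finset.sum_comm]
    have inner : ∀ h : Fin p,
        (∑ k ∈ Finset.range (q.natDegree + 1),
          ((q.coeff k * (σ h) ^ (2 * k + 1) : ℝ) : ℂ) • A h)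
        = (if h = j then (1:ℂ) else 0) • A h := by
      intro h
      rw [← Finset.sum_smul]
      congr 1
      have : (∑ k ∈ Finset.range (q.natDegree + 1),
          ((q.coeff k * (σ h) ^ (2 * k + 1) : ℝ) : ℂ))
          = (((σ h) * Polynomial.eval ((σ h) ^ 2) q : ℝ) : ℂ) := by
        rw [Polynomial.eval_eq_sum_range]
        push_cast
        rw [Finset.mul_sum]
        refine Finset.sum_congr rfl fun k _ => ?_
        rw [pow_add, pow_mul]
        ring
      rw [this, heval h]
      by_cases hh : h = j
      · subst hh
        simp [mul_inv_cancel₀ (ne_of_gt (hpos h))]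
      · simp [hh]
    simp_rw [inner]
    simp [ite_smul]
  -- conclude by linearity
  rw [hAj]
  let F : Matrix (Fin n) (Fin n) ℂ →ₗ[ℝ] Matrix (Fin n) (Fin n) ℂ := IsLinearMap.mk' f hlin
  have : f (∑ k ∈ Finset.range (q.natDegree + 1), q.coeff k • S k)
      = ∑ k ∈ Finset.range (q.natDegree + 1), q.coeff k • f (S k) := by
    show F _ = _
    rw [map_sum]
    exact Finset.sum_congr rfl fun k _ => F.map_smul _ _
  rw [this]
  exact Finset.sum_congr rfl fun k _ => by rw [hSfix k]
end

section
/- For every f as above (automorphism of gl_n(ℂ) as real Lie algebra, commuting with adjoint and preserving the Jordan triple product), either f(XY) = f(X)f(Y) for all X,Y, or f(XY) = −f(Y)f(X) for all X,Y. -/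
open Matrix

theorem stmt_14 {n : ℕ} (f : Matrix (Fin n) (Fin n) ℂ → Matrix (Fin n) (Fin n) ℂ)
    (hlin : IsLinearMap ℝ f) (hbij : Function.Bijective f)
    (hbracket : ∀ A B, f (A * B - B * A) = f A * f B - f B * f A)
    (hstar : ∀ A, f Aᴴ = (f A)ᴴ)
    (htriple : ∀ A B, f (A * B * A) = f A * f B * f A) :
    (∀ X Y, f (X * Y) = f X * f Y) ∨ (∀ X Y, f (X * Y) = -(f Y * f X)) := by
  rcases Nat.eq_zero_or_pos n with hn | hn
  · subst hn
    left
    intro X Y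
    apply Subsingleton.elim
  set e := f 1 with he
  -- every X satisfies X = e * X * e
  have hconj : ∀ X, e * X * e = X := by
    intro X
    obtain ⟨B, hB⟩ := hbij.2 X
    have := htriple 1 B
    simp only [one_mul, mul_one] at this
    rw [hB] at this
    exact this.symm
  have hee : e * e = 1 := by
    have := hconj 1
    rwa [mul_one] at this
  have hcomm : ∀ X, e * X = X * e := by
    intro X
    calc e * X = e * X * (e * e) := by rw [hee, mul_one]
    _ = (e * X * e) * e := by noncomm_ring
    _ = X * e := by rw [hconj]
  -- e is a scalar matrix
  obtain ⟨c, hc⟩ : e ∈ Set.range (Matrix.scalar (Fin n)) := by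
    apply Matrix.mem_range_scalar_of_commute_single
    intro i j _
    exact (hcomm _).symm
  have hsq : ∀ A, f (A * A) = f A * e * f A := by
    intro A
    have := htriple A 1
    simpa using this
  -- polarization: f(XY+YX) = fX e fY + fY e fX
  have hpol : ∀ X Y, f (X * Y + Y * X) = f X * e * f Y + f Y * e * f X := by
    intro X Y
    have h1 := hsq (X + Y)
    have h2 := hsq X
    have h3 := hsq Y
    have hadd : ∀ A B, f (A + B) = f A + f B := hlin.map_add
    have expand : (X + Y) * (X + Y) = X * X + (X * Y + Y * X) + Y * Y := by noncomm_ring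
    rw [expand, hadd, hadd, hadd, h2, h3] at h1
    have hexp : (f X + f Y) * e * (f X + f Y)
        = f X * e * f X + (f X * e * f Y + f Y * e * f X) + f Y * e * f Y := by noncomm_ring
    rw [hadd X Y, hexp] at h1
    rw [hadd]
    exact add_left_cancel (add_right_cancel h1)
  -- main identity
  have hmain : ∀ X Y, (2 : ℝ) • f (X * Y)
      = f X * e * f Y + f Y * e * f X + (f X * f Y - f Y * f X) := by
    intro X Y
    have hb := hbracket X Y
    have hp := hpol X Y
    have : (X * Y + Y * X) + (X * Y - Y * X) = (2 : ℝ) • (X * Y) := by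
      rw [two_smul]; abel
    calc (2 : ℝ) • f (X * Y) = f ((2 : ℝ) • (X * Y)) := (hlin.map_smul _ _).symm
    _ = f ((X * Y + Y * X) + (X * Y - Y * X)) := by rw [this]
    _ = f (X * Y + Y * X) + f (X * Y - Y * X) := hlin.map_add _ _
    _ = _ := by rw [hp, hb]
  -- e = c • 1 with c² = 1
  have hc2 : c * c = 1 := by
    have hne : Nonempty (Fin n) := ⟨⟨0, hn⟩⟩
    have h1 : Matrix.scalar (Fin n) (c * c) = Matrix.scalar (Fin n) 1 := by
      rw [(Matrix.scalar (Fin n)).map_mul, hc, hee, (Matrix.scalar (Fin n)).map_one]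
    exact Matrix.scalar_inj.mp h1
  have hc1 : c = 1 ∨ c = -1 := by
    rcases mul_self_eq_one_iff.mp hc2 with h | h
    · exact Or.inl h
    · exact Or.inr h
  have hescalar : e = c • (1 : Matrix (Fin n) (Fin n) ℂ) := by
    rw [← hc]
    ext i j
    simp [Matrix.scalar_apply, Matrix.one_apply, Matrix.diagonal_apply]
  rcases hc1 with h | h
  · left
    intro X Y
    have hm := hmain X Y
    rw [hescalar, h, one_smul, mul_one] at hm
    have : (2 : ℝ) • f (X * Y) = (2 : ℝ) • (f X * f Y) := by
      rw [hm, two_smul]; noncomm_ring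
    have h2 : (2 : ℝ) ≠ 0 := two_ne_zero
    exact smul_right_injective _ h2 this
  · right
    intro X Y
    have hm := hmain X Y
    rw [hescalar, h] at hm
    have hneg : ∀ A B : Matrix (Fin n) (Fin n) ℂ, A * ((-1 : ℂ) • (1:Matrix (Fin n) (Fin n) ℂ)) * B = -(A * B) := by
      intro A B; simp
    rw [hneg, hneg] at hm
    have : (2 : ℝ) • f (X * Y) = (2 : ℝ) • (-(f Y * f X)) := by
      rw [hm, two_smul]; noncomm_ring
    have h2 : (2 : ℝ) ≠ 0 := two_ne_zero
    exact smul_right_injective _ h2 this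
end

section
/- For n ≥ 3, the matrix M = e^{2πi/n}·Iₙ lies in SU_n but has no generalized principal 𝔰𝔲_n-logarithm: there is no traceless skew-hermitian L with exp(L) = M and all eigenvalues of L of modulus ≤ π. -/
open Matrix Polynomial

attribute [local instance] Matrix.linftyOpNormedRing Matrix.linftyOpNormedAlgebra

lemma aux_root_mem_spectrum {m : ℕ} (A : Matrix (Fin m) (Fin m) ℂ) {μ : ℂ}
    (h : A.charpoly.IsRoot μ) : μ ∈ spectrum ℂ A := by
  rw [spectrum.mem_iff]
  intro hu
  have hdet := (Matrix.isUnit_iff_isUnit_det _).mp hu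
  have hmap : (charmatrix A).map (eval μ) = algebraMap ℂ (Matrix (Fin m) (Fin m) ℂ) μ - A := by
    ext i j
    by_cases hij : i = j <;>
      simp [hij, charmatrix_apply, Matrix.map_apply, Matrix.diagonal_apply,
        Matrix.algebraMap_matrix_apply, Matrix.sub_apply]
  have hev : eval μ A.charpoly = ((charmatrix A).map (eval μ)).det :=
    RingHom.map_det (evalRingHom μ) _
  rw [hmap] at hev
  rw [← hev, Polynomial.IsRoot.def.mp h] at hdet
  exact (isUnit_iff_ne_zero.mp hdet) rfl

theorem stmt_18 (n : ℕ) (hn : 3 ≤ n)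
    (M : Matrix (Fin n) (Fin n) ℂ)
    (hMdef : M = Complex.exp (2 * Real.pi * Complex.I / n) • (1 : Matrix (Fin n) (Fin n) ℂ)) :
    (M ∈ Matrix.unitaryGroup (Fin n) ℂ ∧ M.det = 1) ∧
    ¬ ∃ L : Matrix (Fin n) (Fin n) ℂ, Lᴴ = -L ∧ L.trace = 0 ∧
        NormedSpace.exp L = M ∧
        ∀ μ ∈ spectrum ℂ L, ‖μ‖ ≤ Real.pi := by
  have hn0 : (n : ℂ) ≠ 0 := by
    exact Nat.cast_ne_zero.mpr (by omega)
  set z : ℂ := 2 * Real.pi * Complex.I / n with hz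
  have hconj : (starRingEnd ℂ) (Complex.exp z) = Complex.exp (-z) := by
    rw [← Complex.exp_conj]
    congr 1
    simp only [hz, map_div₀, _root_.map_mul, Complex.conj_I, map_ofNat, Complex.conj_ofReal,
      map_natCast]
    ring
  have hζζ : Complex.exp z * (starRingEnd ℂ) (Complex.exp z) = 1 := by
    rw [hconj, ← Complex.exp_add, add_neg_cancel, Complex.exp_zero]
  constructor
  · constructor
    · rw [Matrix.mem_unitaryGroup_iff, hMdef]
      rw [star_smul, star_one, smul_mul_smul_comm, one_mul]
      rw [show (star (Complex.exp z)) = (starRingEnd ℂ) (Complex.exp z) from rfl, hζζ, one_smul]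
    · rw [hMdef, Matrix.det_smul, det_one, mul_one, Fintype.card_fin, ← Complex.exp_nat_mul]
      rw [show (n : ℂ) * z = 2 * Real.pi * Complex.I by rw [hz]; field_simp]
      exact Complex.exp_two_pi_mul_I
  · rintro ⟨L, _hskew, htr, hexp, hbd⟩
    have hroots : ∀ r ∈ L.charpoly.roots, r = z := by
      intro r hr
      have hrs : r ∈ spectrum ℂ L :=
        aux_root_mem_spectrum L (Polynomial.mem_roots'.mp hr).2
      have h1 := spectrum.exp_mem_exp L hrs
      erw [hexp] at h1
      rw [hMdef] at h1
      have h2 : Complex.exp r = Complex.exp z := by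
        by_contra hne
        apply spectrum.mem_iff.mp h1
        have heq : (algebraMap ℂ (Matrix (Fin n) (Fin n) ℂ)) (NormedSpace.exp r)
            - Complex.exp z • (1 : Matrix (Fin n) (Fin n) ℂ)
            = (algebraMap ℂ (Matrix (Fin n) (Fin n) ℂ)) (Complex.exp r - Complex.exp z) := by
          rw [← Complex.exp_eq_exp_ℂ]
          simp [Algebra.algebraMap_eq_smul_one, sub_smul]
        rw [heq]
        exact (isUnit_iff_ne_zero.mpr (sub_ne_zero.mpr hne)).map (algebraMap ℂ _)
      obtain ⟨k, hk⟩ := Complex.exp_eq_exp_iff_exists_int.mp h2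
      have hbr := hbd r hrs
      have hrval : r = ((2 * Real.pi / n + k * (2 * Real.pi) : ℝ) : ℂ) * Complex.I := by
        rw [hk, hz]
        push_cast
        ring
      have habs : |2 * Real.pi / n + (k : ℝ) * (2 * Real.pi)| ≤ Real.pi := by
        rw [hrval, norm_mul, Complex.norm_I, mul_one, Complex.norm_real, Real.norm_eq_abs] at hbr
        exact hbr
      have hπ := Real.pi_pos
      have hn3 : (3 : ℝ) ≤ n := by exact_mod_cast hn
      have hdiv : 2 * Real.pi / n ≤ 2 * Real.pi / 3 :=
        div_le_div_of_nonneg_left (by positivity) (by norm_num) hn3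
      have hdivpos : 0 < 2 * Real.pi / n := by positivity
      obtain ⟨hab1, hab2⟩ := abs_le.mp habs
      have hk1 : (k : ℝ) < 1 := by nlinarith
      have hk2 : (-1 : ℝ) < k := by nlinarith
      have hk0 : k = 0 := by
        have h1 : k < 1 := by exact_mod_cast hk1
        have h2 : (-1 : ℤ) < k := by exact_mod_cast hk2
        omega
      rw [hk, hk0]
      simp
    have hcard : L.charpoly.roots.card = n := by
      rw [Polynomial.splits_iff_card_roots.mp (IsAlgClosed.splits _),
        Matrix.charpoly_natDegree_eq_dim, Fintype.card_fin]
    have hrep : L.charpoly.roots = Multiset.replicate n z :=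
      Multiset.eq_replicate.mpr ⟨hcard, hroots⟩
    have htr2 : L.trace = n • z := by
      rw [Matrix.trace_eq_sum_roots_charpoly, hrep, Multiset.sum_replicate]
    rw [htr, nsmul_eq_mul] at htr2
    have hzval : (n : ℂ) * z = 2 * Real.pi * Complex.I := by rw [hz]; field_simp
    rw [hzval] at htr2
    have hI := Complex.I_ne_zero
    field_simp at htr2
    have h0 : (Real.pi : ℂ) = 0 := by
      rcases mul_eq_zero.mp htr2.symm with h | h
      · norm_num at h
      · exact absurd h hI
    exact Real.pi_ne_zero (by exact_mod_cast h0)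
end
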